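/- Let n be odd, λ = (n+1)/2, and let a_0, a_1 be binary sequences of length n, e(0) ∈ {0,1}, and c = I(a_0, e(0)+L^λ(a_1)) the binary sequence of length 2n from Construction I. Then for 0 ≤ τ_0 < n: R_c(2τ_0) = R_{a_0}(τ_0) + R_{a_1}(τ_0), and R_c(2τ_0 + 1) = (−1)^{e(0)}(R_{a_0,a_1}(τ_0 + λ) + R_{a_1,a_0}(τ_0 + λ)), where shift arguments are modulo n. -/

import Mathlib

/-- Cross-correlation of two sequences of length `N` over `ℤ_H`, with `ξ = exp(2πi/H)`. -/
noncomputable def crossCorr (H N : ℕ) (s t : ZMod N → ZMod H) (τ : ZMod N) : ℂ :=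
  ∑ i ∈ Finset.range N,
    Complex.exp (2 * (Real.pi : ℂ) * Complex.I / (H : ℂ)) ^ ((s (i : ZMod N) - t ((i : ZMod N) + τ)).val)

/-- Cross-correlation of two binary sequences of length `N` (an integer). -/
def binCorr (N : ℕ) (s t : ZMod N → ZMod 2) (τ : ZMod N) : ℤ :=
  ∑ i ∈ Finset.range N, (-1 : ℤ) ^ ((s (i : ZMod N) + t ((i : ZMod N) + τ)).val)

/-- Cross-correlation of two quaternary sequences of length `N`, with `ξ = √-1`. -/
noncomputable def quadCorr (N : ℕ) (s t : ZMod N → ZMod 4) (τ : ZMod N) : ℂ :=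
  ∑ i ∈ Finset.range N, Complex.I ^ ((s (i : ZMod N) - t ((i : ZMod N) + τ)).val)

/-- Interleaving `u = I(a, b)`: `u(2i) = a(i)`, `u(2i+1) = b(i)`. -/
def interleaveSeq {H : ℕ} (n : ℕ) (a b : ZMod n → ZMod H) : ZMod (2 * n) → ZMod H :=
  fun k => if k.val % 2 = 0 then a ((k.val / 2 : ℕ) : ZMod n) else b ((k.val / 2 : ℕ) : ZMod n)

/-- The inverse Gray mapping `φ⁻¹ : ℤ₂ × ℤ₂ → ℤ₄`. -/
def grayInv (a b : ZMod 2) : ZMod 4 :=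
  if a = 0 then (if b = 0 then 0 else 1) else (if b = 0 then 3 else 2)

/-- Construction I: the quaternary sequence of length `2n` built from
`a₀, a₁, a₂, a₃` and bits `e₀, e₁, e₂`. -/
def constructionI (n : ℕ) (a0 a1 a2 a3 : ZMod n → ZMod 2)
    (e0 e1 e2 : ZMod 2) : ZMod (2 * n) → ZMod 4 :=
  let lam : ZMod n := (((n + 1) / 2 : ℕ) : ZMod n)
  let c := interleaveSeq n a0 (fun i => e0 + a1 (i + lam))
  let d := interleaveSeq n (fun i => e1 + a2 i) (fun i => e2 + a3 (i + lam))
  fun i => grayInv (c i) (d i)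

/-! At an even shift `2τ` the interleaving `c = I(a₀, e₀ + L^λ a₁)` compares even positions with
even ones and odd with odd, giving the autocorrelations of `a₀` and of `e₀ + L^λ a₁`; the constant
`e₀` cancels and the shift `λ` does not change an autocorrelation. At an odd shift `2τ + 1` it
compares even with odd positions, giving `R_{a₀, e₀+L^λ a₁}(τ) + R_{e₀+L^λ a₁, a₀}(τ + 1)`; pulling
out `e₀` and the shifts leaves the arguments `τ + λ` and `τ + 1 - λ`, which agree because
`2λ = n + 1 ≡ 1 (mod n)`. -/

open Finset

lemma Finset.sum_range_two_mul {M : Type*} [AddCommMonoid M] (n : ℕ) (f : ℕ → M) :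
    ∑ i ∈ range (2 * n), f i = ∑ j ∈ range n, (f (2 * j) + f (2 * j + 1)) := by
  induction n with
  | zero => simp
  | succ m ih =>
    rw [show 2 * (m + 1) = 2 * m + 1 + 1 by ring, sum_range_succ, sum_range_succ, ih,
      sum_range_succ, add_assoc]

lemma Finset.sum_range_eq_sum_zmod {M : Type*} [AddCommMonoid M] (n : ℕ) [NeZero n]
    (g : ZMod n → M) : ∑ i ∈ range n, g i = ∑ x : ZMod n, g x :=
  sum_nbij' (fun i => (i : ZMod n)) ZMod.val (fun _ _ => mem_univ _)
    (fun x _ => mem_range.mpr x.val_lt) (fun _ hi => ZMod.val_cast_of_lt (mem_range.mp hi))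
    (fun x _ => ZMod.natCast_zmod_val x) (fun _ _ => rfl)

lemma ZMod.neg_one_pow_val_add (x y : ZMod 2) :
    (-1 : ℤ) ^ (x + y).val = (-1) ^ x.val * (-1) ^ y.val := by
  revert x y; decide

section interleaveSeq

variable {H : ℕ} (n : ℕ) (a b : ZMod n → ZMod H)

lemma interleaveSeq_natCast (k : ℕ) :
    interleaveSeq n a b k = if k % 2 = 0 then a ↑(k / 2) else b ↑(k / 2) := by
  rw [interleaveSeq, ZMod.val_natCast, Nat.mod_mod_of_dvd k (dvd_mul_right 2 n),
    Nat.mod_mul_right_div_self, ZMod.natCast_mod]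

lemma interleaveSeq_two_mul (j : ℕ) : interleaveSeq n a b ((2 * j : ℕ) : ZMod (2 * n)) = a j := by
  rw [interleaveSeq_natCast, if_pos (by omega), Nat.mul_div_cancel_left j two_pos]

lemma interleaveSeq_two_mul_add_one (j : ℕ) :
    interleaveSeq n a b ((2 * j + 1 : ℕ) : ZMod (2 * n)) = b j := by
  rw [interleaveSeq_natCast, if_neg (by omega), show (2 * j + 1) / 2 = j by omega]

end interleaveSeq

section binCorr

variable {N : ℕ} (s t : ZMod N → ZMod 2) (τ : ZMod N)

lemma binCorr_eq_sum_zmod [NeZero N] :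
    binCorr N s t τ = ∑ x : ZMod N, (-1 : ℤ) ^ (s x + t (x + τ)).val :=
  sum_range_eq_sum_zmod N (fun x => (-1 : ℤ) ^ (s x + t (x + τ)).val)

lemma binCorr_const_add_left (e : ZMod 2) :
    binCorr N (fun i => e + s i) t τ = (-1) ^ e.val * binCorr N s t τ := by
  simp only [binCorr, mul_sum, add_assoc, ZMod.neg_one_pow_val_add e]

lemma binCorr_const_add_right (e : ZMod 2) :
    binCorr N s (fun i => e + t i) τ = (-1) ^ e.val * binCorr N s t τ := by
  simp only [binCorr, mul_sum, add_left_comm _ e, ZMod.neg_one_pow_val_add e]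

lemma binCorr_const_add (e : ZMod 2) :
    binCorr N (fun i => e + s i) (fun i => e + t i) τ = binCorr N s t τ := by
  rw [binCorr_const_add_left, binCorr_const_add_right, ← mul_assoc, ← mul_pow, neg_one_mul,
    neg_neg, one_pow, one_mul]

lemma binCorr_comp_add_right (g : ZMod N) :
    binCorr N s (fun i => t (i + g)) τ = binCorr N s t (τ + g) := by
  simp only [binCorr, add_assoc]

lemma binCorr_comp_add_left [NeZero N] (g : ZMod N) :
    binCorr N (fun i => s (i + g)) t τ = binCorr N s t (τ - g) := by
  rw [binCorr_eq_sum_zmod, binCorr_eq_sum_zmod,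
    ← Equiv.sum_comp (Equiv.addRight g) fun x => (-1 : ℤ) ^ (s x + t (x + (τ - g))).val]
  simp only [Equiv.coe_addRight, add_assoc, add_sub_cancel]

end binCorr

section interleaveCorr

variable (n : ℕ) (a b : ZMod n → ZMod 2) (τ : ℕ)

lemma binCorr_interleaveSeq_two_mul :
    binCorr (2 * n) (interleaveSeq n a b) (interleaveSeq n a b) ((2 * τ : ℕ) : ZMod (2 * n)) =
      binCorr n a a τ + binCorr n b b τ := by
  rw [binCorr, sum_range_two_mul, sum_add_distrib]
  congr 1 <;> refine sum_congr rfl fun j _ => ?_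
  · rw [← Nat.cast_add, show 2 * j + 2 * τ = 2 * (j + τ) by ring, interleaveSeq_two_mul,
      interleaveSeq_two_mul, Nat.cast_add]
  · rw [← Nat.cast_add, show 2 * j + 1 + 2 * τ = 2 * (j + τ) + 1 by ring,
      interleaveSeq_two_mul_add_one, interleaveSeq_two_mul_add_one, Nat.cast_add]

lemma binCorr_interleaveSeq_two_mul_add_one :
    binCorr (2 * n) (interleaveSeq n a b) (interleaveSeq n a b) ((2 * τ + 1 : ℕ) : ZMod (2 * n)) =
      binCorr n a b τ + binCorr n b a ((τ : ZMod n) + 1) := by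
  rw [binCorr, sum_range_two_mul, sum_add_distrib]
  congr 1 <;> refine sum_congr rfl fun j _ => ?_
  · rw [← Nat.cast_add, show 2 * j + (2 * τ + 1) = 2 * (j + τ) + 1 by ring, interleaveSeq_two_mul,
      interleaveSeq_two_mul_add_one, Nat.cast_add]
  · rw [← Nat.cast_add, show 2 * j + 1 + (2 * τ + 1) = 2 * (j + τ + 1) by ring,
      interleaveSeq_two_mul_add_one, interleaveSeq_two_mul, Nat.cast_add, Nat.cast_add,
      Nat.cast_one, add_assoc]

end interleaveCorr

lemma Odd.natCast_succ_div_two_add_self {n : ℕ} (hn : Odd n) :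
    (((n + 1) / 2 : ℕ) : ZMod n) + (((n + 1) / 2 : ℕ) : ZMod n) = 1 := by
  obtain ⟨k, rfl⟩ := hn
  rw [← Nat.cast_add, show (2 * k + 1 + 1) / 2 + (2 * k + 1 + 1) / 2 = 2 * k + 1 + 1 by omega,
    Nat.cast_succ, ZMod.natCast_self, zero_add]

theorem stmt6_general (n : ℕ) (hn : Odd n) (a0 a1 : ZMod n → ZMod 2) (e0 : ZMod 2)
    (c : ZMod (2 * n) → ZMod 2)
    (hc : c = interleaveSeq n a0 (fun i => e0 + a1 (i + (((n + 1) / 2 : ℕ) : ZMod n))))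
    (τ0 : ℕ) :
    binCorr (2 * n) c c ((2 * τ0 : ℕ) : ZMod (2 * n)) =
        binCorr n a0 a0 (τ0 : ZMod n) + binCorr n a1 a1 (τ0 : ZMod n) ∧
      binCorr (2 * n) c c ((2 * τ0 + 1 : ℕ) : ZMod (2 * n)) =
        (-1 : ℤ) ^ e0.val *
          (binCorr n a0 a1 ((τ0 : ZMod n) + (((n + 1) / 2 : ℕ) : ZMod n)) +
            binCorr n a1 a0 ((τ0 : ZMod n) + (((n + 1) / 2 : ℕ) : ZMod n))) := by
  have : NeZero n := ⟨hn.pos.ne'⟩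
  have hlam := hn.natCast_succ_div_two_add_self
  set lam : ZMod n := (((n + 1) / 2 : ℕ) : ZMod n)
  subst hc
  refine ⟨?_, ?_⟩
  · rw [binCorr_interleaveSeq_two_mul, binCorr_const_add, binCorr_comp_add_left,
      binCorr_comp_add_right, sub_add_cancel]
  · rw [binCorr_interleaveSeq_two_mul_add_one, binCorr_const_add_right, binCorr_const_add_left,
      binCorr_comp_add_right, binCorr_comp_add_left, ← mul_add,
      show (τ0 : ZMod n) + 1 - lam = τ0 + lam by rw [← hlam]; ring]

theorem stmt6 (n : ℕ) (hn : Odd n) (a0 a1 : ZMod n → ZMod 2) (e0 : ZMod 2)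
    (c : ZMod (2 * n) → ZMod 2)
    (hc : c = interleaveSeq n a0 (fun i => e0 + a1 (i + (((n + 1) / 2 : ℕ) : ZMod n))))
    (τ0 : ℕ) (hτ0 : τ0 < n) :
    binCorr (2 * n) c c ((2 * τ0 : ℕ) : ZMod (2 * n)) =
        binCorr n a0 a0 (τ0 : ZMod n) + binCorr n a1 a1 (τ0 : ZMod n) ∧
      binCorr (2 * n) c c ((2 * τ0 + 1 : ℕ) : ZMod (2 * n)) =
        (-1 : ℤ) ^ e0.val *
          (binCorr n a0 a1 ((τ0 : ZMod n) + (((n + 1) / 2 : ℕ) : ZMod n)) +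
            binCorr n a1 a0 ((τ0 : ZMod n) + (((n + 1) / 2 : ℕ) : ZMod n))) :=
  stmt6_general n hn a0 a1 e0 c hc τ0
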